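/- arXiv:2002.10930 — 7 statements merged into one kernel-verified Lean document; each statement's English description precedes it below -/
import Mathlib

section
/- For every positive integer n, every bipartite graph G with parts A and B each of size n, in which every vertex of A has degree at most 2, contains a bi-hole of size ⌈n/2⌉ - 1; that is, there exist X ⊆ A and Y ⊆ B with |X| = |Y| = ⌈n/2⌉ - 1 and no edge of G between X and Y. -/
/-- A bi-hole of size `k` in an `n × n` bipartite graph with adjacency `G`
between the two parts: sets `X`, `Y` of size `k` with no edge between them. -/
def BiHole (n k : ℕ) (G : Fin n → Fin n → Prop) : Prop :=
  ∃ X Y : Finset (Fin n), X.card = k ∧ Y.card = k ∧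
    ∀ a ∈ X, ∀ b ∈ Y, ¬ G a b

/-- The degree of a vertex `a` of part `A` in the bipartite graph `G`. -/
noncomputable def degA {n : ℕ} (G : Fin n → Fin n → Prop) (a : Fin n) : ℕ :=
  Nat.card {b : Fin n // G a b}

/-!
Write `N(X)` for the neighbourhood of `X ⊆ A`. Starting from `X = A`, where `|N(X)| ≤ |A| + 1`,
delete vertices one at a time while keeping `|N(X)| ≤ |X| + 1`. This is possible because as long
as `|N(X)| > |X|`, double counting with degrees `≤ 2` shows that some `b ∈ N(X)` has a single
neighbour `a` in `X`, and removing `a` removes `b` from `N(X)`. At `|X| = ⌈n/2⌉ - 1` the set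
`B \ N(X)` still has at least `|X|` vertices.
-/

namespace Finset

variable {α β : Type*} [DecidableEq α] [DecidableEq β] {N : α → Finset β} {X : Finset α}

theorem exists_mem_notMem_biUnion_erase (hN : ∀ a ∈ X, #(N a) ≤ 2)
    (hX : #X < #(X.biUnion N)) :
    ∃ a ∈ X, ∃ b ∈ N a, b ∉ (X.erase a).biUnion N := by
  by_contra! hshared
  have htwo : ∀ b ∈ X.biUnion N, 2 ≤ #(bipartiteAbove (fun b a => b ∈ N a) X b) := by
    intro b hb
    obtain ⟨a, ha, hba⟩ := mem_biUnion.mp hb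
    obtain ⟨a', ha', hba'⟩ := mem_biUnion.mp (hshared a ha b hba)
    exact one_lt_card.mpr ⟨a, mem_filter.mpr ⟨ha, hba⟩, a', mem_filter.mpr
      ⟨mem_of_mem_erase ha', hba'⟩, (ne_of_mem_erase ha').symm⟩
  have hcount : #(X.biUnion N) * 2 ≤ #X * 2 :=
    card_mul_le_card_mul _ htwo fun a ha =>
      (card_le_card fun b hb => (mem_filter.mp hb).2).trans (hN a ha)
  omega

theorem exists_card_biUnion_erase_le (hN : ∀ a ∈ X, #(N a) ≤ 2) (hne : X.Nonempty)
    (hX : #(X.biUnion N) ≤ #X + 1) :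
    ∃ a ∈ X, #((X.erase a).biUnion N) ≤ #X := by
  by_cases hsmall : #(X.biUnion N) ≤ #X
  · obtain ⟨a, ha⟩ := hne
    exact ⟨a, ha, (card_le_card (biUnion_subset_biUnion_of_subset_left _
      (erase_subset a X))).trans hsmall⟩
  · obtain ⟨a, ha, b, hb, hbnot⟩ := exists_mem_notMem_biUnion_erase hN (by omega)
    have hsub : (X.erase a).biUnion N ⊆ (X.biUnion N).erase b := fun c hc =>
      mem_erase.mpr ⟨fun hcb => hbnot (hcb ▸ hc),
        biUnion_subset_biUnion_of_subset_left _ (erase_subset a X) hc⟩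
    refine ⟨a, ha, (card_le_card hsub).trans ?_⟩
    rw [card_erase_of_mem (mem_biUnion.mpr ⟨a, ha, hb⟩)]
    omega

theorem exists_subset_card_eq_card_biUnion_le (hN : ∀ a ∈ X, #(N a) ≤ 2)
    (hX : #(X.biUnion N) ≤ #X + 1) {j : ℕ} (hj : j ≤ #X) :
    ∃ Y ⊆ X, #Y = j ∧ #(Y.biUnion N) ≤ j + 1 := by
  induction hd : #X - j generalizing X with
  | zero => exact ⟨X, Subset.rfl, by omega, by omega⟩
  | succ d ih =>
    obtain ⟨a, ha, hshrink⟩ := exists_card_biUnion_erase_le hN (card_pos.mp (by omega)) hX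
    have hcard : #(X.erase a) = #X - 1 := card_erase_of_mem ha
    obtain ⟨Y, hYX, hY⟩ := ih (X := X.erase a) (fun a' ha' => hN a' (mem_of_mem_erase ha'))
      (by omega) (by omega) (by omega)
    exact ⟨Y, hYX.trans (erase_subset a X), hY⟩

end Finset

open Finset in
theorem bihole_of_max_degree_two_general (n : ℕ)
    (G : Fin n → Fin n → Prop) (hdeg : ∀ a, degA G a ≤ 2) :
    BiHole n ((n + 1) / 2 - 1) G := by
  classical
  set N : Fin n → Finset (Fin n) := fun a => {b | G a b}
  have hN : ∀ a ∈ univ, #(N a) ≤ 2 := fun a _ => by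
    simpa only [N, degA, Nat.card_eq_fintype_card, Fintype.card_subtype] using hdeg a
  have huniv : #(univ.biUnion N) ≤ #(univ : Finset (Fin n)) + 1 :=
    (card_le_univ _).trans (by simp)
  obtain ⟨X, -, hX, hXN⟩ := exists_subset_card_eq_card_biUnion_le hN huniv
    (j := (n + 1) / 2 - 1) (by rw [card_univ, Fintype.card_fin]; omega)
  have hcompl : (n + 1) / 2 - 1 ≤ #(X.biUnion N)ᶜ := by
    rw [card_compl, Fintype.card_fin]
    omega
  obtain ⟨Y, hY, hYcard⟩ := exists_subset_card_eq hcompl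
  exact ⟨X, Y, hX, hYcard, fun a ha b hb hab =>
    mem_compl.mp (hY hb) (mem_biUnion.mpr ⟨a, ha, by simpa [N] using hab⟩)⟩

/-- every `n × n` bipartite graph with one-sided maximum degree at
most 2 contains a bi-hole of size `⌈n/2⌉ - 1`. -/
theorem bihole_of_max_degree_two (n : ℕ) (hn : 1 ≤ n)
    (G : Fin n → Fin n → Prop) (hdeg : ∀ a, degA G a ≤ 2) :
    BiHole n ((n + 1) / 2 - 1) G :=
  bihole_of_max_degree_two_general n G hdeg
end

section
/- For every positive integer n, the cycle C_{2n} on 2n vertices, viewed as an n × n bipartite graph, contains no bi-hole of size ⌈n/2⌉; hence the largest k such that every n × n bipartite graph with one-sided maximum degree at most 2 has a bi-hole of size k is exactly ⌈n/2⌉ - 1. -/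
/-- The cycle `C_{2n}` viewed as an `n × n` bipartite graph: `a_i` is joined to
`b_i` and `b_{i+1 mod n}`. -/
def cycleGraph (n : ℕ) : Fin n → Fin n → Prop :=
  fun i j => (j : ℕ) = (i : ℕ) ∨ (j : ℕ) = ((i : ℕ) + 1) % n

/-!
Lower bound: if `(X, Y)` is a bi-hole of `C_{2n}`, then `Y` avoids both `X` and `X + 1`. When
`#X = #Y = ⌈n/2⌉` this forces `X = Yᶜ` and `X + 1 ⊆ X`, so `X` is everything, which is absurd.

Upper bound: read each `a` as an edge (or loop) `N a` of a multigraph on the `b`'s. If a vertex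
set `S` carries at least `#S - 1` edges, then among `#S - 1` of them some vertex of `S` lies on
at most one, and deleting that vertex keeps the invariant. Hence for every `s` there are `s`
vertices spanning at least `s - 1` edges; with `s = n - k` and `2k < n` these give `k` vertices
`a` whose neighbourhoods miss the remaining `k` vertices `b`.
-/

open Finset

section Multigraph

variable {α β : Type*} [DecidableEq β] (N : α → Finset β)

theorem exists_card_filter_mem_le_one {S : Finset β} {A : Finset α}
    (hN : ∀ a ∈ A, #(N a) ≤ 2) (hAS : #A < #S) :
    ∃ v ∈ S, #{a ∈ A | v ∈ N a} ≤ 1 := by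
  by_contra! h
  have hdeg : ∑ a ∈ A, #{v ∈ S | v ∈ N a} = ∑ v ∈ S, #{a ∈ A | v ∈ N a} :=
    sum_card_bipartiteAbove_eq_sum_card_bipartiteBelow (fun a v => v ∈ N a)
  have hle : ∑ a ∈ A, #{v ∈ S | v ∈ N a} ≤ ∑ _a ∈ A, 2 :=
    sum_le_sum fun a ha => (card_le_card fun _ hv => (mem_filter.1 hv).2).trans (hN a ha)
  have hge : ∑ _v ∈ S, 2 ≤ ∑ v ∈ S, #{a ∈ A | v ∈ N a} := sum_le_sum h
  simp only [sum_const, smul_eq_mul] at hle hge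
  omega

theorem exists_subset_card_eq_le_card_filter_subset_add_one {S : Finset β} {A : Finset α}
    (hNS : ∀ a ∈ A, N a ⊆ S) (hN : ∀ a ∈ A, #(N a) ≤ 2) (hSA : #S ≤ #A + 1)
    {s : ℕ} (hs : s ≤ #S) : ∃ T ⊆ S, #T = s ∧ s ≤ #{a ∈ A | N a ⊆ T} + 1 := by
  induction S using Finset.strongInduction generalizing A with
  | H S ih =>
  rcases hs.eq_or_lt with rfl | hsS
  · exact ⟨S, subset_rfl, rfl, by rw [filter_true_of_mem hNS]; omega⟩
  obtain ⟨A₀, hA₀A, hA₀⟩ := exists_subset_card_eq (show #S - 1 ≤ #A by omega)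
  obtain ⟨v, hvS, hv⟩ :=
    exists_card_filter_mem_le_one N (fun a ha => hN a (hA₀A ha)) (by omega : #A₀ < #S)
  have hA' : #A₀ ≤ #{a ∈ A₀ | v ∉ N a} + 1 := by
    have := card_filter_add_card_filter_not (s := A₀) (fun a => v ∈ N a)
    omega
  obtain ⟨T, hTS, hT, hsT⟩ := ih (S.erase v) (erase_ssubset hvS) (A := {a ∈ A₀ | v ∉ N a})
    (fun a ha x hx => mem_erase.2 ⟨fun hxv => (mem_filter.1 ha).2 (hxv ▸ hx),
      hNS a (hA₀A (mem_filter.1 ha).1) hx⟩)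
    (fun a ha => hN a (hA₀A (mem_filter.1 ha).1))
    (by rw [card_erase_of_mem hvS]; omega) (by rw [card_erase_of_mem hvS]; omega)
  refine ⟨T, hTS.trans (erase_subset _ _), hT, hsT.trans ?_⟩
  gcongr
  exact (filter_subset _ _).trans hA₀A

end Multigraph

theorem BiHole.mono {n k k' : ℕ} {G : Fin n → Fin n → Prop} (hG : BiHole n k' G)
    (hk : k ≤ k') : BiHole n k G := by
  obtain ⟨X, Y, hX, hY, hXY⟩ := hG
  obtain ⟨X', hX'X, hX'⟩ := exists_subset_card_eq (hX ▸ hk)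
  obtain ⟨Y', hY'Y, hY'⟩ := exists_subset_card_eq (hY ▸ hk)
  exact ⟨X', Y', hX', hY', fun a ha b hb => hXY a (hX'X ha) b (hY'Y hb)⟩

theorem degA_eq_card_filter {n : ℕ} (G : Fin n → Fin n → Prop) [DecidableRel G] (a : Fin n) :
    degA G a = #{b | G a b} := by
  rw [degA, Nat.card_eq_fintype_card, Fintype.card_subtype]

theorem biHole_of_degA_le_two {n k : ℕ} (hk : 2 * k < n) (G : Fin n → Fin n → Prop)
    (hG : ∀ a, degA G a ≤ 2) : BiHole n k G := by
  classical
  let N a : Finset (Fin n) := {b | G a b}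
  obtain ⟨T, -, hT, hTN⟩ := exists_subset_card_eq_le_card_filter_subset_add_one N
    (S := univ) (A := univ) (fun _ _ => subset_univ _)
    (fun a _ => (degA_eq_card_filter G a).symm.trans_le (hG a)) (by simp) (s := n - k) (by simp)
  obtain ⟨X, hXN, hX⟩ := exists_subset_card_eq (show k ≤ #{a | N a ⊆ T} by omega)
  refine ⟨X, Tᶜ, hX, by rw [card_compl, Fintype.card_fin, hT]; omega, fun a ha b hb hab => ?_⟩
  exact mem_compl.1 hb ((mem_filter.1 (hXN ha)).2 (mem_filter.2 ⟨mem_univ _, hab⟩))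

section Cycle

variable {n : ℕ} [NeZero n]

theorem cycleGraph_iff {i j : Fin n} : cycleGraph n i j ↔ j = i ∨ j = i + 1 := by
  simp only [cycleGraph, Fin.ext_iff, Fin.val_add, Fin.val_one', Nat.add_mod_mod]

theorem degA_cycleGraph_le_two (a : Fin n) : degA (cycleGraph n) a ≤ 2 := by
  classical
  rw [degA_eq_card_filter]
  calc #{b | cycleGraph n a b} ≤ #{a, a + 1} :=
        card_le_card fun b hb => by simpa [cycleGraph_iff] using hb
    _ ≤ 2 := card_le_two

open Fin.NatCast in
theorem Fin.eq_univ_of_add_one_mem {X : Finset (Fin n)} (hX : X.Nonempty)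
    (h : ∀ i ∈ X, i + 1 ∈ X) : X = univ := by
  obtain ⟨i, hi⟩ := hX
  have hiter (m : ℕ) : i + (m : Fin n) ∈ X := by
    induction m with
    | zero => simpa using hi
    | succ m ih => simpa [add_assoc] using h _ ih
  refine eq_univ_of_forall fun j => ?_
  simpa [Fin.cast_val_eq_self] using hiter (j - i : Fin n)

theorem not_biHole_cycleGraph : ¬ BiHole n ((n + 1) / 2) (cycleGraph n) := by
  rintro ⟨X, Y, hX, hY, hXY⟩
  have hn : 0 < n := Nat.pos_of_neZero n
  have hXYc : X ⊆ Yᶜ := fun a ha =>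
    mem_compl.2 fun hb => hXY a ha a hb (cycleGraph_iff.2 (.inl rfl))
  have hX_eq : X = Yᶜ :=
    eq_of_subset_of_card_le hXYc (by rw [card_compl, Fintype.card_fin]; omega)
  have hX_univ : X = univ := Fin.eq_univ_of_add_one_mem (card_pos.1 (by omega)) fun a ha => by
    rw [hX_eq]
    exact mem_compl.2 fun hb => hXY a ha _ hb (cycleGraph_iff.2 (.inr rfl))
  have hcard := congrArg card hX_eq
  rw [hX_univ, card_univ, card_compl, Fintype.card_fin] at hcard
  omega

end Cycle

/-- `C_{2n}` has no bi-hole of size `⌈n/2⌉`; hence `⌈n/2⌉ - 1` is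
the largest `k` such that every `n × n` bipartite graph with one-sided maximum
degree at most `2` has a bi-hole of size `k`. -/
theorem cycle_no_bihole_and_f_two (n : ℕ) (hn : 1 ≤ n) :
    ¬ BiHole n ((n + 1) / 2) (cycleGraph n) ∧
      IsGreatest {k | ∀ G : Fin n → Fin n → Prop,
        (∀ a, degA G a ≤ 2) → BiHole n k G} ((n + 1) / 2 - 1) := by
  have : NeZero n := NeZero.of_pos hn
  refine ⟨not_biHole_cycleGraph, fun G => biHole_of_degA_le_two (by omega) G, fun k hk => ?_⟩
  by_contra! hlt
  exact not_biHole_cycleGraph ((hk _ degA_cycleGraph_le_two).mono (by omega))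
end

section
/- Let G be a graph with n vertices and n edges (n ≥ 2). Then G contains a set E' of ⌈n/2⌉ - 1 edges and a set V' of ⌈n/2⌉ - 1 vertices such that no edge of E' is incident to any vertex of V'. -/
/-!
Call a family of `m` edges *sparse* if its edges cover at most `m + 1` vertices. A nonempty
sparse family has an edge whose removal leaves a sparse family: either the family covers at
most `m` vertices already, or, by double counting incidences, some covered vertex lies on a
single edge, and removing that edge uncovers it. Peeling edges off the family of all `n` edges
(which covers at most `n` vertices) leaves `k = ⌈n/2⌉ - 1` edges covering at most `k + 1`
vertices, and `n - (k + 1) ≥ k` vertices remain to form `V'`.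
-/

open Finset

lemma Sym2.card_toFinset_le_two {α : Type*} [DecidableEq α] (z : Sym2 α) : #z.toFinset ≤ 2 := by
  rw [Sym2.card_toFinset]
  split <;> omega

section EdgeCover

variable {V ι : Type*} [DecidableEq V] (e : ι → Sym2 V)

def edgeCover (S : Finset ι) : Finset V := S.biUnion fun i => (e i).toFinset

variable {e}

lemma mem_edgeCover {S : Finset ι} {v : V} : v ∈ edgeCover e S ↔ ∃ i ∈ S, v ∈ e i := by
  simp [edgeCover]

lemma edgeCover_mono {S T : Finset ι} (h : S ⊆ T) : edgeCover e S ⊆ edgeCover e T :=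
  biUnion_subset_biUnion_of_subset_left _ h

lemma exists_mem_edgeCover_card_filter_le_one {S : Finset ι} (h : #S < #(edgeCover e S)) :
    ∃ v ∈ edgeCover e S, #{i ∈ S | v ∈ e i} ≤ 1 := by
  by_contra! hdeg
  have hends : ∀ i ∈ S, #{v ∈ edgeCover e S | v ∈ e i} ≤ 2 := fun i _ =>
    (card_le_card fun v hv => Sym2.mem_toFinset.mpr (mem_filter.mp hv).2).trans
      (Sym2.card_toFinset_le_two (e i))
  have := card_mul_le_card_mul (fun v i => v ∈ e i) hdeg hends
  omega

variable [DecidableEq ι]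

lemma exists_card_edgeCover_erase_le {S : Finset ι} (hS : S.Nonempty)
    (h : #(edgeCover e S) ≤ #S + 1) : ∃ i ∈ S, #(edgeCover e (S.erase i)) ≤ #S := by
  by_cases hle : #(edgeCover e S) ≤ #S
  · obtain ⟨i, hi⟩ := hS
    exact ⟨i, hi, (card_le_card (edgeCover_mono (erase_subset i S))).trans hle⟩
  obtain ⟨v, hv, hleaf⟩ := exists_mem_edgeCover_card_filter_le_one (not_le.mp hle)
  obtain ⟨i, hi, hvi⟩ := mem_edgeCover.mp hv
  have hunique : ∀ j ∈ S, v ∈ e j → j = i := fun j hj hvj =>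
    card_le_one.mp hleaf j (mem_filter.mpr ⟨hj, hvj⟩) i (mem_filter.mpr ⟨hi, hvi⟩)
  have hsub : edgeCover e (S.erase i) ⊆ (edgeCover e S).erase v := by
    intro w hw
    obtain ⟨j, hj, hwj⟩ := mem_edgeCover.mp hw
    refine mem_erase.mpr ⟨?_, edgeCover_mono (erase_subset i S) hw⟩
    rintro rfl
    exact ne_of_mem_erase hj (hunique j (mem_of_mem_erase hj) hwj)
  refine ⟨i, hi, (card_le_card hsub).trans ?_⟩
  rw [card_erase_of_mem hv]
  omega

lemma exists_subset_card_eq_card_edgeCover_le {F : Finset ι} {k : ℕ}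
    (h : #(edgeCover e F) ≤ #F + 1) (hk : k ≤ #F) :
    ∃ S ⊆ F, #S = k ∧ #(edgeCover e S) ≤ k + 1 := by
  induction F using Finset.strongInduction with
  | H F ih =>
    obtain hFk | hkF := hk.eq_or_lt
    · exact ⟨F, Subset.rfl, hFk.symm, hFk ▸ h⟩
    obtain ⟨i, hi, hi'⟩ := exists_card_edgeCover_erase_le (card_pos.mp (by omega)) h
    have hcard : #(F.erase i) = #F - 1 := card_erase_of_mem hi
    obtain ⟨S, hSF, hS⟩ := ih (F.erase i) (erase_ssubset hi) (by omega) (by omega)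
    exact ⟨S, hSF.trans (erase_subset i F), hS⟩

end EdgeCover

theorem edges_vertices_separation_general (n : ℕ)
    (V : Type*) [Fintype V] (hV : Fintype.card V = n)
    (e : Fin n → Sym2 V) :
    ∃ (E' : Finset (Fin n)) (V' : Finset V),
      E'.card = (n + 1) / 2 - 1 ∧ V'.card = (n + 1) / 2 - 1 ∧
      ∀ i ∈ E', ∀ v ∈ V', v ∉ e i := by
  classical
  have hcover : #(edgeCover e univ) ≤ #(univ : Finset (Fin n)) + 1 := by
    have := card_le_univ (edgeCover e univ)
    simp only [card_univ, Fintype.card_fin]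
    omega
  obtain ⟨E', -, hE', hE'cover⟩ :=
    exists_subset_card_eq_card_edgeCover_le hcover (k := (n + 1) / 2 - 1)
      (by rw [card_univ, Fintype.card_fin]; omega)
  have hfree : (n + 1) / 2 - 1 ≤ #(univ \ edgeCover e E') := by
    rw [card_sdiff_of_subset (subset_univ _), card_univ, hV]
    omega
  obtain ⟨V', hV'free, hV'⟩ := exists_subset_card_eq hfree
  refine ⟨E', V', hE', hV', fun i hi v hv hvi => ?_⟩
  exact (mem_sdiff.mp (hV'free hv)).2 (mem_edgeCover.mpr ⟨i, hi, hvi⟩)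

/-- a (multi)graph with `n` vertices and `n` edges (`n ≥ 2`),
given by an edge-indexing function `e : Fin n → Sym2 V`, contains a set `E'` of
`⌈n/2⌉ - 1` edges and a set `V'` of `⌈n/2⌉ - 1` vertices such that no edge of
`E'` is incident to a vertex of `V'`. -/
theorem edges_vertices_separation (n : ℕ) (hn : 2 ≤ n)
    (V : Type*) [Fintype V] (hV : Fintype.card V = n)
    (e : Fin n → Sym2 V) :
    ∃ (E' : Finset (Fin n)) (V' : Finset V),
      E'.card = (n + 1) / 2 - 1 ∧ V'.card = (n + 1) / 2 - 1 ∧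
      ∀ i ∈ E', ∀ v ∈ V', v ∉ e i :=
  edges_vertices_separation_general n V hV e
end

section
/- For all integers n, Δ ≥ 2, every bipartite graph with parts A and B each of size n in which every vertex of A has degree at most Δ contains a bi-hole of size ⌊(n-2)/Δ⌋. -/
/-!
Write `N(X)` for the neighbourhood of a set `X ⊆ A`. It suffices to find `X` with `|X| = k` and
`|N(X)| ≤ k(Δ - 1) + 1`, since `kΔ + 2 ≤ n` then leaves `k` vertices of `B` outside `N(X)`.

More generally, if `|N(A')| ≤ |A'| + s`, then `A'` contains, for every `j ≤ |A'|`, a set `X` of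
size `j` with `|N(X)| ≤ j(Δ - 1) + 1 + s`; for `A' = A` take `s = 0`. Grow `X`
from one vertex, each time adding a vertex sharing a neighbour with `X`, which costs at most
`Δ - 1` new neighbours. If this gets stuck, `A'` splits as `E ⊔ F` with `N(E) ∩ N(F) = ∅`.
Taking `E` to have the smaller excess `|N(E)| - |E|`, either `X` fits inside `E`, or we take
all of `E` (at cost `≤ |E| + s ≤ |E|(Δ - 1) + s`) and recurse into `F` with the budget `s`
diminished by the excess of `E`.
-/

open Finset

namespace Finset

variable {α β : Type*} [DecidableEq α] [DecidableEq β] (N : α → Finset β)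

theorem card_biUnion_insert_le_of_inter_nonempty {X : Finset α} {y : α}
    (hy : (N y ∩ X.biUnion N).Nonempty) :
    #((insert y X).biUnion N) + 1 ≤ #(X.biUnion N) + #(N y) := by
  rw [biUnion_insert, ← card_sdiff_add_card, ← card_sdiff_add_card_inter (N y) (X.biUnion N)]
  have := hy.card_pos
  omega

theorem exists_subset_card_biUnion_le_or_split {Δ : ℕ} (hΔ : 1 ≤ Δ) {A : Finset α}
    (hdeg : ∀ a ∈ A, #(N a) ≤ Δ) {j : ℕ} (hj : 1 ≤ j) (hjA : j ≤ #A) :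
    (∃ X ⊆ A, #X = j ∧ #(X.biUnion N) ≤ j * (Δ - 1) + 1) ∨
      ∃ E F, E ∪ F = A ∧ Disjoint E F ∧ E.Nonempty ∧ F.Nonempty ∧
        Disjoint (E.biUnion N) (F.biUnion N) := by
  induction j, hj using Nat.le_induction with
  | base =>
    obtain ⟨a, ha⟩ := card_pos.mp hjA
    refine .inl ⟨{a}, singleton_subset_iff.mpr ha, card_singleton a, ?_⟩
    simpa [singleton_biUnion] using (hdeg a ha).trans (by omega)
  | succ j hj ih =>
    obtain ⟨X, hXA, hX, hXN⟩ | hsplit := ih (by omega)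
    · by_cases hdisj : Disjoint (X.biUnion N) ((A \ X).biUnion N)
      · exact .inr ⟨X, A \ X, union_sdiff_of_subset hXA, disjoint_sdiff, card_pos.mp (by omega),
          card_pos.mp (by rw [card_sdiff_of_subset hXA]; omega), hdisj⟩
      obtain ⟨c, hcX, hcA⟩ := not_disjoint_iff.mp hdisj
      obtain ⟨y, hy, hcy⟩ := mem_biUnion.mp hcA
      obtain ⟨hyA, hyX⟩ := mem_sdiff.mp hy
      have hgrow := card_biUnion_insert_le_of_inter_nonempty N ⟨c, mem_inter.mpr ⟨hcy, hcX⟩⟩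
      refine .inl ⟨insert y X, insert_subset hyA hXA, by rw [card_insert_of_notMem hyX, hX], ?_⟩
      have := hdeg y hyA
      rw [add_one_mul]
      omega
    · exact .inr hsplit

theorem exists_subset_card_eq_card_biUnion_le_s3 {Δ : ℕ} (hΔ : 2 ≤ Δ) (A : Finset α)
    (hdeg : ∀ a ∈ A, #(N a) ≤ Δ) {s : ℕ} (hs : #(A.biUnion N) ≤ #A + s) {j : ℕ}
    (hjA : j ≤ #A) :
    ∃ X ⊆ A, #X = j ∧ #(X.biUnion N) ≤ j * (Δ - 1) + 1 + s := by
  induction A using strongInduction generalizing s j with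
  | H A ih =>
  rcases Nat.eq_zero_or_pos j with rfl | hj
  · exact ⟨∅, empty_subset A, card_empty, by simp⟩
  obtain ⟨X, hXA, hX, hXN⟩ | ⟨E, F, hEF, hdisj, hE, hF, hN⟩ :=
    exists_subset_card_biUnion_le_or_split N (by omega) hdeg hj hjA
  · exact ⟨X, hXA, hX, by omega⟩
  wlog hexcess : #(E.biUnion N) + #F ≤ #(F.biUnion N) + #E generalizing E F
  · exact this F E (by rw [union_comm, hEF]) hdisj.symm hF hE hN.symm (by omega)
  subst hEF
  have hcard : #(E ∪ F) = #E + #F := card_union_of_disjoint hdisj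
  have hcardN : #((E ∪ F).biUnion N) = #(E.biUnion N) + #(F.biUnion N) := by
    rw [union_biUnion, card_union_of_disjoint hN]
  have hEA : E ⊂ E ∪ F := ssubset_of_subset_of_ne subset_union_left fun h => by
    have := congrArg card h; have := hF.card_pos; omega
  have hFA : F ⊂ E ∪ F := ssubset_of_subset_of_ne subset_union_right fun h => by
    have := congrArg card h; have := hE.card_pos; omega
  by_cases hjE : j ≤ #E
  · obtain ⟨X, hXE, hX, hXN⟩ :=
      ih E hEA (fun a ha => hdeg a (subset_union_left ha)) (s := s) (by omega) hjE
    exact ⟨X, hXE.trans subset_union_left, hX, hXN⟩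
  obtain ⟨X, hXF, hX, hXN⟩ := ih F hFA (fun a ha => hdeg a (subset_union_right ha))
    (s := #E + s - #(E.biUnion N)) (j := j - #E) (by omega) (by omega)
  refine ⟨E ∪ X, union_subset_union_right hXF, ?_, ?_⟩
  · rw [card_union_of_disjoint (hdisj.mono_right hXF), hX]
    omega
  · have hsplit : j * (Δ - 1) = #E * (Δ - 1) + (j - #E) * (Δ - 1) := by
      rw [← add_mul, Nat.add_sub_cancel' (by omega)]
    have hE_le : #E ≤ #E * (Δ - 1) := Nat.le_mul_of_pos_right _ (by omega)
    have := card_union_le (E.biUnion N) (X.biUnion N)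
    rw [← union_biUnion] at this
    omega

end Finset

theorem biHole_of_card_biUnion_le {n k : ℕ} (G : Fin n → Fin n → Prop) [DecidableRel G]
    (X : Finset (Fin n)) (hX : #X = k) (hXN : #(X.biUnion fun a => {b | G a b}) + k ≤ n) :
    BiHole n k G := by
  have hY : k ≤ #(univ \ X.biUnion fun a => {b | G a b}) := by
    rw [card_sdiff_of_subset (subset_univ _), card_univ, Fintype.card_fin]
    omega
  obtain ⟨Y, hYsub, hY⟩ := exists_subset_card_eq hY
  refine ⟨X, Y, hX, hY, fun a ha b hb hab => (mem_sdiff.mp (hYsub hb)).2 ?_⟩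
  exact mem_biUnion.mpr ⟨a, ha, by simpa using hab⟩

/-- for `n, Δ ≥ 2`, every `n × n` bipartite graph with one-sided
maximum degree at most `Δ` contains a bi-hole of size `⌊(n-2)/Δ⌋`. -/
theorem bihole_general_delta (n Δ : ℕ) (hn : 2 ≤ n) (hΔ : 2 ≤ Δ)
    (G : Fin n → Fin n → Prop) (hdeg : ∀ a, degA G a ≤ Δ) :
    BiHole n ((n - 2) / Δ) G := by
  classical
  set k := (n - 2) / Δ
  have hk : k * Δ + 2 ≤ n := by have : k * Δ ≤ n - 2 := Nat.div_mul_le_self (n - 2) Δ; omega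
  obtain ⟨X, -, hX, hXN⟩ := exists_subset_card_eq_card_biUnion_le_s3 (fun a => {b | G a b}) hΔ univ
    (fun a _ => degA_eq_card_filter G a ▸ hdeg a) (s := 0)
    (by simpa using card_le_univ (univ.biUnion fun a => {b | G a b}))
    (j := k) (by simpa using hk.trans' (by nlinarith))
  refine biHole_of_card_biUnion_le G X hX ?_
  have : k * (Δ - 1) + k = k * Δ := by rw [← Nat.mul_add_one, Nat.sub_add_cancel (by omega)]
  omega
end

section
/- Let G be a bipartite graph with parts A, B of size n each, where every vertex in A has degree at most Δ. If S ⊆ B and T ⊆ A is the set of vertices of A with at least Δ - 2 neighbors in S, then every vertex of T has at most 2 neighbors in B \ S; consequently, if |T| ≥ |B \ S| = m, then G contains a bi-hole of size ⌈m/2⌉ - 1. -/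
/-- Number of neighbors of `a` inside the set `S ⊆ B`. -/
noncomputable def degIn {n : ℕ} (G : Fin n → Fin n → Prop)
    (S : Finset (Fin n)) (a : Fin n) : ℕ :=
  Nat.card {b : Fin n // b ∈ S ∧ G a b}

/-!
View each `a ∈ A` as an edge (or loop) of a multigraph on `B` with ends `N a`, and let a vertex
set `C` span the edges `{a ∈ A | N a ⊆ C}`. If `C` spans at least `#C - 1` edges, so does
`C.erase x` for a vertex `x` of at most average degree in the spanned multigraph, because these
degrees sum to at most twice the number of spanned edges. Since `B` spans all `#A ≥ #B` edges,
peeling `B` down to `#B - k` vertices, `k = ⌈#B / 2⌉ - 1`, leaves a set `C` spanning at least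
`#B - k - 1 ≥ k` edges; they all miss the `k` vertices of `B \ C`.
-/

open Finset

section Peeling

variable {α β : Type*} [DecidableEq β] {A : Finset α} {N : α → Finset β}

lemma card_filter_subset_erase_add (C : Finset β) (x : β) :
    #{a ∈ A | N a ⊆ C.erase x} + #{a ∈ {a ∈ A | N a ⊆ C} | x ∈ N a} =
      #{a ∈ A | N a ⊆ C} := by
  rw [← card_filter_add_card_filter_not (fun a => x ∈ N a) (s := {a ∈ A | N a ⊆ C}),
    add_comm, filter_filter]
  simp_rw [subset_erase, filter_filter]

lemma sum_card_filter_mem_le (hN : ∀ a ∈ A, #(N a) ≤ 2) (C : Finset β) :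
    ∑ x ∈ C, #{a ∈ {a ∈ A | N a ⊆ C} | x ∈ N a} ≤ 2 * #{a ∈ A | N a ⊆ C} := by
  have := sum_card_bipartiteAbove_eq_sum_card_bipartiteBelow
    (s := {a ∈ A | N a ⊆ C}) (t := C) (r := fun a x => x ∈ N a)
  simp only [bipartiteAbove, bipartiteBelow] at this
  rw [← this, mul_comm, ← smul_eq_mul]
  exact sum_le_card_nsmul _ _ _ fun a ha =>
    (card_le_card fun x hx => (mem_filter.1 hx).2).trans (hN a (mem_filter.1 ha).1)

lemma exists_mem_card_le_card_filter_subset_erase (hN : ∀ a ∈ A, #(N a) ≤ 2)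
    {C : Finset β} (hC : C.Nonempty) (h : #C ≤ #{a ∈ A | N a ⊆ C} + 1) :
    ∃ x ∈ C, #C ≤ #{a ∈ A | N a ⊆ C.erase x} + 2 := by
  set e := #{a ∈ A | N a ⊆ C}
  obtain ⟨x, hxC, hx⟩ : ∃ x ∈ C, #{a ∈ {a ∈ A | N a ⊆ C} | x ∈ N a} * #C ≤ 2 * e := by
    refine exists_le_of_sum_le hC ?_
    rw [← sum_mul, sum_const, smul_eq_mul, mul_comm #C]
    exact Nat.mul_le_mul_right _ (sum_card_filter_mem_le hN C)
  refine ⟨x, hxC, ?_⟩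
  have hsplit := card_filter_subset_erase_add (A := A) (N := N) C x
  have hdeg : #{a ∈ {a ∈ A | N a ⊆ C} | x ∈ N a} ≤ e := card_filter_le _ _
  -- for degree `d ≥ 2` and `#C ≥ 2`, `(d - 2) * (#C - 2) ≥ 0` turns `d * #C ≤ 2 * e` into the goal
  nlinarith

lemma exists_subset_card_eq_le_card_filter_subset (hN : ∀ a ∈ A, #(N a) ≤ 2)
    {B : Finset β} (hB : #B ≤ #{a ∈ A | N a ⊆ B} + 1) {c : ℕ} (hc : c ≤ #B) :
    ∃ C ⊆ B, #C = c ∧ c ≤ #{a ∈ A | N a ⊆ C} + 1 := by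
  suffices ∀ j ≤ #B, ∃ C ⊆ B, #C + j = #B ∧ #C ≤ #{a ∈ A | N a ⊆ C} + 1 by
    obtain ⟨C, hCB, hCcard, hC⟩ := this (#B - c) (Nat.sub_le _ _)
    exact ⟨C, hCB, by omega, by omega⟩
  intro j
  induction j with
  | zero => exact fun _ => ⟨B, subset_rfl, rfl, hB⟩
  | succ j ih =>
    intro hj
    obtain ⟨C, hCB, hCcard, hC⟩ := ih (by omega)
    obtain ⟨x, hxC, hx⟩ :=
      exists_mem_card_le_card_filter_subset_erase hN (card_pos.1 (by omega)) hC
    refine ⟨C.erase x, (erase_subset x C).trans hCB, ?_, ?_⟩ <;>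
      rw [card_erase_of_mem hxC] <;> omega

end Peeling

theorem exists_biHole_of_card_le_two {α β : Type*} [DecidableEq β] {A : Finset α}
    {B : Finset β} {N : α → Finset β} (hNB : ∀ a ∈ A, N a ⊆ B) (hN : ∀ a ∈ A, #(N a) ≤ 2)
    (hBA : #B ≤ #A) :
    ∃ X ⊆ A, ∃ Y ⊆ B, #X = (#B + 1) / 2 - 1 ∧ #Y = (#B + 1) / 2 - 1 ∧
      ∀ a ∈ X, Disjoint (N a) Y := by
  set k := (#B + 1) / 2 - 1
  have hB : #B ≤ #{a ∈ A | N a ⊆ B} + 1 := by rw [filter_true_of_mem hNB]; omega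
  obtain ⟨C, hCB, hCcard, hC⟩ :=
    exists_subset_card_eq_le_card_filter_subset hN hB (c := #B - k) (Nat.sub_le _ _)
  obtain ⟨X, hX, hXcard⟩ := exists_subset_card_eq (s := {a ∈ A | N a ⊆ C}) (n := k) (by omega)
  obtain ⟨Y, hY, hYcard⟩ := exists_subset_card_eq (s := B \ C) (n := k)
    (by rw [card_sdiff_of_subset hCB]; omega)
  refine ⟨X, fun a ha => (mem_filter.1 (hX ha)).1, Y, fun b hb => (mem_sdiff.1 (hY hb)).1,
    hXcard, hYcard, fun a ha => ?_⟩
  exact disjoint_of_subset_left (mem_filter.1 (hX ha)).2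
    (disjoint_of_subset_right hY disjoint_sdiff)

lemma degIn_add_card_notMem_eq_degA {n : ℕ} (G : Fin n → Fin n → Prop) (S : Finset (Fin n))
    (a : Fin n) : degIn G S a + Nat.card {b : Fin n // b ∉ S ∧ G a b} = degA G a := by
  classical
  simp only [degIn, degA, Nat.card_eq_fintype_card, Fintype.card_subtype]
  rw [← card_filter_add_card_filter_not (· ∈ S) (s := {b | G a b}), filter_filter, filter_filter]
  simp only [and_comm]

/-- if every vertex of `A` has degree at most `Δ`, `S ⊆ B`, and
`T` is the set of vertices of `A` with at least `Δ - 2` neighbors in `S`, then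
every vertex of `T` has at most `2` neighbors in `B \ S`; consequently if
`|T| ≥ |B \ S| = m` then `G` has a bi-hole of size `⌈m/2⌉ - 1`. -/
theorem high_degree_into_S (n Δ m : ℕ) (G : Fin n → Fin n → Prop)
    (hdeg : ∀ a, degA G a ≤ Δ) (S : Finset (Fin n)) :
    (∀ a : Fin n, Δ - 2 ≤ degIn G S a →
      Nat.card {b : Fin n // b ∉ S ∧ G a b} ≤ 2) ∧
    (Sᶜ.card = m → m ≤ Nat.card {a : Fin n // Δ - 2 ≤ degIn G S a} →
      BiHole n ((m + 1) / 2 - 1) G) := by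
  classical
  have hout : ∀ a : Fin n, Δ - 2 ≤ degIn G S a → Nat.card {b : Fin n // b ∉ S ∧ G a b} ≤ 2 :=
    fun a ha => by have := degIn_add_card_notMem_eq_degA G S a; have := hdeg a; omega
  refine ⟨hout, fun hm hT => ?_⟩
  simp only [Nat.card_eq_fintype_card, Fintype.card_subtype] at hout hT
  obtain ⟨X, -, Y, hY, hX, hYcard, hXY⟩ := exists_biHole_of_card_le_two
    (A := {a | Δ - 2 ≤ degIn G S a}) (B := Sᶜ) (N := fun a => {b | b ∉ S ∧ G a b})
    (fun a _ b hb => mem_compl.2 (mem_filter.1 hb).2.1) (fun a ha => hout a (mem_filter.1 ha).2)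
    (hm ▸ hT)
  subst hm
  exact ⟨X, Y, hX, hYcard, fun a ha b hb hab =>
    disjoint_left.1 (hXY a ha) (mem_filter.2 ⟨mem_univ b, mem_compl.1 (hY hb), hab⟩) hb⟩
end

section
/- For every ε ∈ (0,1) and sufficiently large n, every n × n bipartite graph with at least ε n² edges contains a complete bipartite subgraph K_{t,t} (respecting sides) with t ≥ c·log n, for some constant c depending only on ε. -/
/-!
Kővári–Sós–Turán double counting. The sum `∑_y C(deg y, t)` counts pairs of a `t`-set `X` of
left vertices and a right vertex adjacent to all of `X`; once it reaches `t · C(m, t)`, some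
`t`-set has `t` common neighbours. With density `ε`, at least `ε n / 2` right vertices have
degree `a ≥ ε m / 2 - 1`, and `C(a, t) ≥ ((a + 1 - t) / m) ^ t · C(m, t) ≥ (ε / 4) ^ t · C(m, t)`,
so it suffices that `t ≤ (ε n / 2) (ε / 4) ^ t`. For `t ≤ log n / (2 log (4 / ε)) + 1` we have
`(ε / 4) ^ t ≥ (ε / 4) / √n`, and the condition reduces to `t ≤ ε² √n / 8`, true for large `n`.
-/

open Filter Real Finset

theorem Nat.add_one_sub_pow_mul_choose_le (a m t : ℕ) :
    (a + 1 - t) ^ t * m.choose t ≤ m ^ t * a.choose t := by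
  refine Nat.le_of_mul_le_mul_left ?_ t.factorial_pos
  calc t.factorial * ((a + 1 - t) ^ t * m.choose t) = (a + 1 - t) ^ t * m.descFactorial t := by
        rw [Nat.descFactorial_eq_factorial_mul_choose]; ring
    _ ≤ a.descFactorial t * m ^ t :=
        Nat.mul_le_mul (Nat.pow_sub_le_descFactorial a t) (Nat.descFactorial_le_pow m t)
    _ = t.factorial * (m ^ t * a.choose t) := by
        rw [Nat.descFactorial_eq_factorial_mul_choose]; ring

theorem Finset.sum_le_card_filter_le_mul_add {ι : Type*} (s : Finset ι) (f : ι → ℕ) {a m : ℕ}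
    (hf : ∀ i ∈ s, f i ≤ m) : ∑ i ∈ s, f i ≤ #{i ∈ s | a ≤ f i} * m + #s * a := by
  rw [← sum_filter_add_sum_filter_not s (a ≤ f ·)]
  gcongr
  · exact sum_le_card_nsmul _ _ _ fun i hi => hf i (mem_filter.1 hi).1
  · calc ∑ i ∈ s with ¬a ≤ f i, f i ≤ #{i ∈ s | ¬a ≤ f i} * a :=
          sum_le_card_nsmul _ _ _ fun i hi => (not_le.1 (mem_filter.1 hi).2).le
      _ ≤ #s * a := by gcongr; exact filter_subset _ _

variable {α β : Type*} [Fintype α] [Fintype β]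

theorem natCard_subtype_eq_sum_card_filter (G : α → β → Prop) [DecidableRel G] :
    Nat.card {p : α × β // G p.1 p.2} = ∑ y, #{x | G x y} := by
  rw [Nat.card_eq_fintype_card, Fintype.card_subtype, ← univ_product_univ, card_filter,
    sum_product_right]
  simp_rw [card_filter]

theorem exists_complete_bipartite_of_sum_choose (G : α → β → Prop) [DecidableRel G]
    {t : ℕ} (ht : t ≤ Fintype.card α)
    (h : t * (Fintype.card α).choose t ≤ ∑ y, (#{x | G x y}).choose t) :
    ∃ (X : Finset α) (Y : Finset β), #X = t ∧ #Y = t ∧ ∀ a ∈ X, ∀ b ∈ Y, G a b := by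
  have hcount : ∑ X ∈ powersetCard t univ, #{y | ∀ x ∈ X, G x y} =
      ∑ y, (#{x | G x y}).choose t := by
    refine (sum_card_bipartiteAbove_eq_sum_card_bipartiteBelow (fun X y => ∀ x ∈ X, G x y)).trans
      (sum_congr rfl fun y _ => ?_)
    rw [← card_powersetCard]
    congr 1
    ext X
    simp [bipartiteBelow, mem_powersetCard, subset_iff, and_comm]
  obtain ⟨X, hX, hXt⟩ : ∃ X ∈ powersetCard t univ, t ≤ #{y | ∀ x ∈ X, G x y} := by
    by_contra! hlt
    have := sum_lt_sum_of_nonempty (powersetCard_nonempty.2 (by simpa using ht)) hlt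
    simp only [sum_const, card_powersetCard, card_univ, smul_eq_mul, hcount] at this
    linarith [mul_comm t ((Fintype.card α).choose t)]
  obtain ⟨Y, hY, hYt⟩ := exists_subset_card_eq hXt
  exact ⟨X, Y, (mem_powersetCard.1 hX).2, hYt, fun a ha b hb => (mem_filter.1 (hY hb)).2 a ha⟩

theorem exists_complete_bipartite_of_density (G : α → β → Prop) [DecidableRel G] {ε : ℝ}
    (hε0 : 0 < ε) (hε1 : ε ≤ 1) {t : ℕ}
    (hG : ε * Fintype.card α * Fintype.card β ≤ ∑ y, #{x | G x y})
    (htα : (t : ℝ) ≤ ε * Fintype.card α / 4)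
    (htβ : (t : ℝ) ≤ ε * Fintype.card β / 2 * (ε / 4) ^ t) :
    ∃ (X : Finset α) (Y : Finset β), #X = t ∧ #Y = t ∧ ∀ a ∈ X, ∀ b ∈ Y, G a b := by
  obtain rfl | ht0 := t.eq_zero_or_pos
  · exact ⟨∅, ∅, rfl, rfl, by simp⟩
  set m := Fintype.card α
  set deg : β → ℕ := fun y => #{x | G x y}
  set a := ⌊ε * m / 2⌋₊
  set K := #{y | a ≤ deg y}
  have ht1 : (1 : ℝ) ≤ t := by exact_mod_cast ht0
  have hm : (0 : ℝ) < m := by nlinarith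
  have ha : (a : ℝ) ≤ ε * m / 2 := Nat.floor_le (by positivity)
  have ha' : ε * m / 2 < a + 1 := Nat.lt_floor_add_one _
  have hK : ε * Fintype.card β / 2 ≤ K := by
    have h := sum_le_card_filter_le_mul_add univ deg (a := a) fun y _ => card_filter_le _ _
    have h' : ((∑ y, deg y : ℕ) : ℝ) ≤ K * m + Fintype.card β * a := by exact_mod_cast h
    by_contra! hlt
    nlinarith [mul_le_mul_of_nonneg_left ha (Nat.cast_nonneg (α := ℝ) (Fintype.card β)),
      mul_lt_mul_of_pos_right hlt hm]
  have hta : t ≤ a + 1 := by exact_mod_cast (by linarith : (t : ℝ) ≤ a + 1)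
  have hw : ε / 4 ≤ ((a + 1 - t : ℕ) : ℝ) / m := by
    rw [Nat.cast_sub hta, le_div_iff₀ hm]; push_cast; linarith
  have hchoose : (((a + 1 - t : ℕ) : ℝ) / m) ^ t * m.choose t ≤ a.choose t := by
    rw [div_pow, div_mul_eq_mul_div, div_le_iff₀ (by positivity), mul_comm _ ((m : ℝ) ^ t)]
    exact_mod_cast Nat.add_one_sub_pow_mul_choose_le a m t
  have hsum : K * a.choose t ≤ ∑ y, (deg y).choose t :=
    calc K * a.choose t ≤ ∑ y with a ≤ deg y, (deg y).choose t := by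
          rw [← smul_eq_mul]
          exact card_nsmul_le_sum _ _ _ fun y hy => Nat.choose_le_choose t (mem_filter.1 hy).2
      _ ≤ ∑ y, (deg y).choose t := sum_le_sum_of_subset (filter_subset _ _)
  have htm : t ≤ m := by exact_mod_cast (by nlinarith : (t : ℝ) ≤ m)
  refine exists_complete_bipartite_of_sum_choose G htm ?_
  have : ((t * m.choose t : ℕ) : ℝ) ≤ (K * a.choose t : ℕ) := by
    push_cast
    calc (t : ℝ) * m.choose t ≤ ε * Fintype.card β / 2 * (ε / 4) ^ t * m.choose t := by gcongr
        _ ≤ K * ((((a + 1 - t : ℕ) : ℝ) / m) ^ t * m.choose t) := by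
          rw [mul_assoc]; gcongr
        _ ≤ K * a.choose t := by gcongr
  exact (Nat.cast_le.1 this).trans hsum

theorem div_sqrt_le_pow {q x : ℝ} (hq0 : 0 < q) (hq1 : q < 1) (hx : 0 < x) {t : ℕ}
    (ht : (t : ℝ) ≤ log x / (2 * log q⁻¹) + 1) : q / √x ≤ q ^ t := by
  have hL : 0 < log q⁻¹ := log_pos (one_lt_inv_iff₀.2 ⟨hq0, hq1⟩)
  have hpow : q ^ (log x / (2 * log q⁻¹)) * √x = 1 := by
    have hq : log q ≠ 0 := by rw [log_inv] at hL; linarith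
    rw [sqrt_eq_rpow, rpow_def_of_pos hq0, rpow_def_of_pos hx, ← exp_add, log_inv,
      exp_eq_one_iff]
    field_simp
    ring
  calc q / √x = q ^ (log x / (2 * log q⁻¹) + 1) := by
        rw [rpow_add hq0, rpow_one, div_eq_iff (sqrt_pos.2 hx).ne', mul_right_comm, hpow, one_mul]
    _ ≤ q ^ (t : ℝ) := rpow_le_rpow_of_exponent_ge hq0 hq1.le ht
    _ = q ^ t := rpow_natCast q t

theorem eventually_mul_log_add_one_le_mul_sqrt (c : ℝ) {A : ℝ} (hA : 0 < A) :
    ∀ᶠ x : ℝ in atTop, c * log x + 1 ≤ A * √x := by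
  have hsqrt : Tendsto (fun x : ℝ => x ^ (1 / 2 : ℝ)) atTop atTop :=
    tendsto_rpow_atTop (by norm_num)
  have ho : (fun x => c * log x + 1) =o[atTop] fun x : ℝ => x ^ (1 / 2 : ℝ) :=
    ((isLittleO_log_rpow_atTop (by norm_num)).const_mul_left c).add
      ((Asymptotics.isLittleO_one_left_iff ℝ).2 (tendsto_norm_atTop_atTop.comp hsqrt))
  filter_upwards [ho.bound hA, eventually_ge_atTop 0] with x hx hx0
  rw [sqrt_eq_rpow]
  exact (le_abs_self _).trans (by simpa [abs_of_nonneg (rpow_nonneg hx0 _)] using hx)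

theorem eventually_kst_parameter_bounds {ε : ℝ} (hε0 : 0 < ε) (hε1 : ε ≤ 1) :
    ∀ᶠ n : ℕ in atTop, ∀ t : ℕ, (t : ℝ) ≤ log n / (2 * log (ε / 4)⁻¹) + 1 →
      (t : ℝ) ≤ ε * n / 4 ∧ (t : ℝ) ≤ ε * n / 2 * (ε / 4) ^ t := by
  filter_upwards [tendsto_natCast_atTop_atTop.eventually
    (eventually_mul_log_add_one_le_mul_sqrt (1 / (2 * log (ε / 4)⁻¹))
      (A := ε ^ 2 / 8) (by positivity)),
    eventually_ge_atTop 1] with n hn hn1 t ht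
  have hn0 : (1 : ℝ) ≤ n := by exact_mod_cast hn1
  have ht' : (t : ℝ) ≤ ε ^ 2 / 8 * √n := by
    rw [div_eq_mul_one_div, mul_comm] at ht; linarith
  have hsqrt : √(n : ℝ) ≤ n := sqrt_le_iff.2 ⟨by positivity, by nlinarith⟩
  constructor
  · nlinarith
  · have hpow := div_sqrt_le_pow (by positivity) (by linarith) (by positivity) ht
    calc (t : ℝ) ≤ ε ^ 2 / 8 * √n := ht'
      _ = ε * n / 2 * (ε / 4 / √n) := by
          have hs : 0 < √(n : ℝ) := sqrt_pos.2 (by positivity)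
          field_simp
          rw [sq_sqrt (by positivity)]
          ring
      _ ≤ ε * n / 2 * (ε / 4) ^ t := by gcongr

/-- for every `ε ∈ (0,1)` there is `c > 0` so that for all large
`n`, every `n × n` bipartite graph with at least `ε n²` edges contains a copy
of `K_{t,t}` respecting sides with `t ≥ c log n`. -/
theorem kst_log (ε : ℝ) (hε : ε ∈ Set.Ioo (0 : ℝ) 1) :
    ∃ c : ℝ, 0 < c ∧ ∃ N : ℕ, ∀ n : ℕ, N ≤ n →
      ∀ G : Fin n → Fin n → Prop,
        ε * (n : ℝ) ^ 2 ≤ (Nat.card {p : Fin n × Fin n // G p.1 p.2} : ℝ) →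
        ∃ (t : ℕ) (X Y : Finset (Fin n)),
          c * Real.log n ≤ (t : ℝ) ∧ X.card = t ∧ Y.card = t ∧
          ∀ a ∈ X, ∀ b ∈ Y, G a b := by
  classical
  obtain ⟨hε0, hε1⟩ := hε
  have hL : 0 < log (ε / 4)⁻¹ := log_pos (by rw [inv_div, one_lt_div hε0]; linarith)
  obtain ⟨N, hN⟩ := eventually_atTop.1 (eventually_kst_parameter_bounds hε0 hε1.le)
  refine ⟨1 / (2 * log (ε / 4)⁻¹), by positivity, N, fun n hn G hG => ?_⟩
  set t := ⌈1 / (2 * log (ε / 4)⁻¹) * log n⌉₊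
  have ht : (t : ℝ) ≤ 1 / (2 * log (ε / 4)⁻¹) * log n + 1 :=
    (Nat.ceil_lt_add_one (by have := log_natCast_nonneg n; positivity)).le
  rw [one_div_mul_eq_div] at ht
  obtain ⟨htα, htβ⟩ := hN n hn t ht
  rw [natCard_subtype_eq_sum_card_filter] at hG
  obtain ⟨X, Y, hX, hY, hXY⟩ := exists_complete_bipartite_of_density G hε0 hε1.le
    (by simpa [sq, mul_assoc] using hG) (by simpa using htα) (by simpa using htβ)
  exact ⟨t, X, Y, Nat.le_ceil _, hX, hY, hXY⟩
end

section
/- Let Δ' ≥ 13.5 and N ≥ 2 with m := 2N log Δ' / Δ' ≥ 6/5. In the random bipartite graph G(N, N, Δ'/N), the probability that there exist X and Y, one in each part, with |X| = |Y| = ⌈m⌉ and no edges between X and Y, is at most (e / (2 log Δ'))^{2m}, which is at most 1/4. -/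
/-!
Union bound over the `C(N, k)²` pairs of `k`-sets, `k = ⌈m⌉`: each pair spans no edge with
probability `(1 - p)^{k²} ≤ e^{-pk²}`, and `C(N, k) ≤ (Ne/k)^k`, so the probability is at most
`(Ne/k · e^{-pk/2})^{2k}`. As `pk ≥ pm = 2 log Δ'`, the base is at most `Ne/(kΔ') ≤ e/(2 log Δ')`.
The bound `1/4` follows from `log 13.5 > 5/2` and `2m ≥ 12/5`.
-/

open MeasureTheory

noncomputable def bern (p : ℝ) : Measure Bool :=
  ENNReal.ofReal p • Measure.dirac true + ENNReal.ofReal (1 - p) • Measure.dirac false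

/-- The random bipartite graph `G(N, N, p)`: each of the `N²` possible edges is
present independently with probability `p`. -/
noncomputable def randomBipartite (N : ℕ) (p : ℝ) : Measure (Fin N × Fin N → Bool) :=
  Measure.pi fun _ : Fin N × Fin N => bern p

open Real

lemma bern_singleton_false (p : ℝ) : bern p {false} = ENNReal.ofReal (1 - p) := by
  simp [bern]

lemma isProbabilityMeasure_bern {p : ℝ} (h0 : 0 ≤ p) (h1 : p ≤ 1) :
    IsProbabilityMeasure (bern p) := by
  constructor
  simp only [bern, Measure.add_apply, Measure.smul_apply, smul_eq_mul, measure_univ, mul_one]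
  rw [← ENNReal.ofReal_add h0 (by linarith)]
  norm_num

lemma pi_bern_forall_false {ι : Type*} [Fintype ι] {p : ℝ} (h0 : 0 ≤ p) (h1 : p ≤ 1)
    (s : Finset ι) :
    Measure.pi (fun _ : ι => bern p) {g | ∀ i ∈ s, g i = false} =
      ENNReal.ofReal (1 - p) ^ s.card := by
  have := isProbabilityMeasure_bern h0 h1
  change Measure.pi _ ((s : Set ι).pi fun _ => {false}) = _
  rw [Measure.pi_pi_finset, Finset.prod_const, bern_singleton_false]

lemma randomBipartite_exists_edgeless_le {p : ℝ} (h0 : 0 ≤ p) (h1 : p ≤ 1) (N k : ℕ) :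
    randomBipartite N p {g | ∃ X Y : Finset (Fin N), X.card = k ∧ Y.card = k ∧
        ∀ a ∈ X, ∀ b ∈ Y, g (a, b) = false} ≤
      ENNReal.ofReal ((N.choose k : ℝ) ^ 2 * (1 - p) ^ (k * k)) := by
  classical
  set P : Finset (Finset (Fin N) × Finset (Fin N)) :=
    Finset.univ.powersetCard k ×ˢ Finset.univ.powersetCard k
  have hsub : {g : Fin N × Fin N → Bool | ∃ X Y : Finset (Fin N), X.card = k ∧ Y.card = k ∧
        ∀ a ∈ X, ∀ b ∈ Y, g (a, b) = false} ⊆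
      ⋃ q ∈ P, {g | ∀ i ∈ q.1 ×ˢ q.2, g i = false} := by
    rintro g ⟨X, Y, hX, hY, hg⟩
    refine Set.mem_biUnion (x := (X, Y)) (by simp [P, hX, hY]) ?_
    rintro ⟨a, b⟩ hab
    exact hg a (Finset.mem_product.1 hab).1 b (Finset.mem_product.1 hab).2
  calc _ ≤ ∑ q ∈ P, randomBipartite N p {g | ∀ i ∈ q.1 ×ˢ q.2, g i = false} :=
        (measure_mono hsub).trans (measure_biUnion_finset_le _ _)
    _ = ∑ _q ∈ P, ENNReal.ofReal (1 - p) ^ (k * k) := by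
        refine Finset.sum_congr rfl fun q hq => ?_
        simp only [P, Finset.mem_product, Finset.mem_powersetCard_univ] at hq
        rw [randomBipartite, pi_bern_forall_false h0 h1, Finset.card_product, hq.1, hq.2]
    _ = _ := by
        rw [Finset.sum_const, Finset.card_product, Finset.card_powersetCard, Finset.card_univ,
          Fintype.card_fin, nsmul_eq_mul, ENNReal.ofReal_mul (by positivity),
          ENNReal.ofReal_pow (by positivity), ENNReal.ofReal_natCast,
          ENNReal.ofReal_pow (by linarith)]
        push_cast
        ring

lemma choose_le_mul_exp_one_div_pow (n k : ℕ) : (n.choose k : ℝ) ≤ (n * exp 1 / k) ^ k := by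
  rcases k.eq_zero_or_pos with rfl | hk
  · simp
  have hfact : (k : ℝ) ^ k / exp k ≤ k.factorial := by
    rw [div_le_iff₀ (exp_pos _), mul_comm, ← div_le_iff₀ (by positivity)]
    exact pow_div_factorial_le_exp _ k.cast_nonneg k
  calc (n.choose k : ℝ) ≤ n ^ k / k.factorial := Nat.choose_le_pow_div k n
    _ ≤ n ^ k / ((k : ℝ) ^ k / exp k) := by gcongr
    _ = (n * exp 1 / k) ^ k := by rw [div_pow, mul_pow, exp_one_pow]; field_simp

lemma choose_sq_mul_one_sub_pow_le {p : ℝ} (h1 : p ≤ 1) (n k : ℕ) :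
    (n.choose k : ℝ) ^ 2 * (1 - p) ^ (k * k) ≤ (n * exp 1 / k * exp (-(p * k / 2))) ^ (2 * k) := by
  have hchoose : (n.choose k : ℝ) ^ 2 ≤ (n * exp 1 / k) ^ (2 * k) := by
    rw [mul_comm 2 k, pow_mul]
    exact pow_le_pow_left₀ (Nat.cast_nonneg _) (choose_le_mul_exp_one_div_pow n k) 2
  have hedges : (1 - p) ^ (k * k) ≤ exp (-(p * k / 2)) ^ (2 * k) :=
    calc (1 - p) ^ (k * k) ≤ exp (-p) ^ (k * k) :=
          pow_le_pow_left₀ (by linarith) (one_sub_le_exp_neg p) _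
      _ = exp (-(p * k / 2)) ^ (2 * k) := by
          rw [← exp_nat_mul, ← exp_nat_mul]
          push_cast
          ring_nf
  calc (n.choose k : ℝ) ^ 2 * (1 - p) ^ (k * k)
      ≤ (n * exp 1 / k) ^ (2 * k) * exp (-(p * k / 2)) ^ (2 * k) :=
        mul_le_mul hchoose hedges (by positivity) (by positivity)
    _ = _ := (mul_pow _ _ _).symm

lemma mul_exp_one_div_mul_exp_neg_le {N k Δ : ℝ} (hΔ : 1 < Δ) (hN : 0 < N)
    (hk : 2 * N * log Δ / Δ ≤ k) :
    N * exp 1 / k * exp (-(Δ / N * k / 2)) ≤ exp 1 / (2 * log Δ) := by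
  have hL : 0 < log Δ := log_pos hΔ
  have hkΔ : 2 * N * log Δ ≤ k * Δ := (div_le_iff₀ (by linarith)).1 hk
  have hk0 : 0 < k := lt_of_lt_of_le (by positivity) hk
  have hexp : exp (-(Δ / N * k / 2)) ≤ Δ⁻¹ :=
    calc exp (-(Δ / N * k / 2)) ≤ exp (-log Δ) := by
          gcongr
          rw [show Δ / N * k / 2 = k * Δ / (2 * N) by ring, le_div_iff₀ (by positivity)]
          linarith
      _ = Δ⁻¹ := by rw [exp_neg, exp_log (by linarith)]
  calc N * exp 1 / k * exp (-(Δ / N * k / 2)) ≤ N * exp 1 / k * Δ⁻¹ := by gcongr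
    _ ≤ exp 1 / (2 * log Δ) := by
        rw [← div_eq_mul_inv, div_div, div_le_div_iff₀ (by positivity) (by positivity)]
        nlinarith [exp_pos 1]

lemma five_div_two_lt_log {Δ : ℝ} (hΔ : 13.5 ≤ Δ) : 5 / 2 < log Δ := by
  rw [lt_log_iff_exp_lt (by linarith)]
  refine lt_of_lt_of_le ?_ hΔ
  have hsq : exp (5 / 2) ^ 2 < 13.5 ^ 2 :=
    calc exp (5 / 2) ^ 2 = exp 1 ^ 5 := by rw [← exp_nat_mul, exp_one_pow]; norm_num
      _ < 2.7182818286 ^ 5 := pow_lt_pow_left₀ exp_one_lt_d9 (exp_pos 1).le (by norm_num)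
      _ < 13.5 ^ 2 := by norm_num
  exact (pow_lt_pow_iff_left₀ (exp_pos _).le (by norm_num) (by norm_num)).1 hsq

lemma exp_one_div_five_rpow_le {x : ℝ} (hx : 12 / 5 ≤ x) : (exp 1 / 5) ^ x ≤ 1 / 4 := by
  have he := exp_one_lt_d9
  have h0 : 0 < exp 1 / 5 := by positivity
  calc (exp 1 / 5) ^ x ≤ (exp 1 / 5) ^ (12 / 5 : ℝ) :=
        rpow_le_rpow_of_exponent_ge h0 (by linarith) hx
    _ ≤ 1 / 4 := by
        rw [← pow_le_pow_iff_left₀ (by positivity) (by norm_num) (by norm_num : 5 ≠ 0),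
          ← rpow_natCast, ← rpow_mul h0.le]
        norm_num
        calc (exp 1 / 5) ^ 12 ≤ (2.7182818286 / 5) ^ 12 := by gcongr
          _ ≤ 1 / 1024 := by norm_num

theorem random_graph_no_large_bihole_general (N : ℕ) (Δ' : ℝ)
    (hΔ : 13.5 ≤ Δ') (hΔN : Δ' ≤ N) (m : ℝ)
    (hm : m = 2 * N * Real.log Δ' / Δ') (hm65 : 6 / 5 ≤ m) :
    randomBipartite N (Δ' / N)
        {g : Fin N × Fin N → Bool | ∃ X Y : Finset (Fin N),
          X.card = ⌈m⌉₊ ∧ Y.card = ⌈m⌉₊ ∧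
          ∀ a ∈ X, ∀ b ∈ Y, g (a, b) = false} ≤
      ENNReal.ofReal ((Real.exp 1 / (2 * Real.log Δ')) ^ (2 * m)) ∧
    (Real.exp 1 / (2 * Real.log Δ')) ^ (2 * m) ≤ 1 / 4 := by
  have hNpos : (0 : ℝ) < N := by linarith
  have hp0 : 0 ≤ Δ' / N := by positivity
  have hp1 : Δ' / N ≤ 1 := (div_le_one hNpos).2 hΔN
  have hL := five_div_two_lt_log hΔ
  set b := exp 1 / (2 * log Δ')
  have hb0 : 0 < b := div_pos (exp_pos 1) (by linarith)
  have hb : b ≤ exp 1 / 5 := div_le_div_of_nonneg_left (exp_pos 1).le (by norm_num) (by linarith)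
  have hb1 : b ≤ 1 := hb.trans (by linarith [exp_one_lt_d9])
  have hmk : m ≤ ⌈m⌉₊ := Nat.le_ceil m
  refine ⟨?_, (rpow_le_rpow hb0.le hb (by linarith)).trans (exp_one_div_five_rpow_le (by linarith))⟩
  calc _ ≤ ENNReal.ofReal ((N.choose ⌈m⌉₊ : ℝ) ^ 2 * (1 - Δ' / N) ^ (⌈m⌉₊ * ⌈m⌉₊)) :=
        randomBipartite_exists_edgeless_le hp0 hp1 N _
    _ ≤ ENNReal.ofReal (b ^ (2 * ⌈m⌉₊)) := by
        refine ENNReal.ofReal_le_ofReal ((choose_sq_mul_one_sub_pow_le hp1 N _).trans ?_)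
        exact pow_le_pow_left₀ (by positivity)
          (mul_exp_one_div_mul_exp_neg_le (by linarith) hNpos (hm ▸ hmk)) _
    _ ≤ ENNReal.ofReal (b ^ (2 * m)) := by
        rw [← rpow_natCast]
        exact ENNReal.ofReal_le_ofReal
          (rpow_le_rpow_of_exponent_ge hb0 hb1 (by push_cast; linarith))

/-- for `Δ' ≥ 13.5` and `m = 2N log Δ' / Δ' ≥ 6/5`, in
`G(N, N, Δ'/N)` the probability that some pair of `⌈m⌉`-sets, one in each
part, spans no edge is at most `(e / (2 log Δ'))^{2m} ≤ 1/4`. -/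
theorem random_graph_no_large_bihole (N : ℕ) (hN : 2 ≤ N) (Δ' : ℝ)
    (hΔ : 13.5 ≤ Δ') (hΔN : Δ' ≤ N) (m : ℝ)
    (hm : m = 2 * N * Real.log Δ' / Δ') (hm65 : 6 / 5 ≤ m) :
    randomBipartite N (Δ' / N)
        {g : Fin N × Fin N → Bool | ∃ X Y : Finset (Fin N),
          X.card = ⌈m⌉₊ ∧ Y.card = ⌈m⌉₊ ∧
          ∀ a ∈ X, ∀ b ∈ Y, g (a, b) = false} ≤
      ENNReal.ofReal ((Real.exp 1 / (2 * Real.log Δ')) ^ (2 * m)) ∧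
    (Real.exp 1 / (2 * Real.log Δ')) ^ (2 * m) ≤ 1 / 4 :=
  random_graph_no_large_bihole_general N Δ' hΔ hΔN m hm hm65
end
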